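/- arXiv:1310.7165 — 3 statements merged into one kernel-verified Lean document; each statement's English description precedes it below -/
import Mathlib

section
/- Dvoretzky–Rogers Lemma: For every n ≥ 1 and every 2n-dimensional normed space X, there exist vectors x₁, …, xₙ in the closed unit ball of X with ‖xᵢ‖ ≥ 1/2 for all i, such that for all scalars α₁, …, αₙ one has ‖Σᵢ αᵢ xᵢ‖ ≤ (Σᵢ |αᵢ|²)^{1/2}. -/
/-!
Identify `X` with `ℓ₂^{2n}` and pick a contraction `T : ℓ₂^{2n} → X` of maximal `|det T|`.
If `T` shrank the orthogonal complement of a subspace `K` of dimension `< n` by a factor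
`c < 1/2`, then precomposing `T` with the map that is `1/√2` on `K` and `1/(√2 c)` on `Kᗮ` would
give another contraction of strictly larger `|det|`. So every such `Kᗮ` contains a unit vector
`v` with `‖T v‖ ≥ 1/2`; choosing these greedily yields an orthonormal `u₁, …, uₙ`, and the
`xᵢ = T uᵢ` satisfy the `ℓ₂` bound because `T` is a contraction.
-/

open Module Metric

theorem ContinuousLinearMap.exists_norm_eq_one_norm_apply_eq_opNorm {E F : Type*}
    [NormedAddCommGroup E] [NormedSpace ℝ E] [FiniteDimensional ℝ E] [Nontrivial E]
    [NormedAddCommGroup F] [NormedSpace ℝ F] (f : E →L[ℝ] F) :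
    ∃ v, ‖v‖ = 1 ∧ ‖f v‖ = ‖f‖ := by
  obtain ⟨v, hv, hmax⟩ := (isCompact_sphere (0 : E) 1).exists_isMaxOn
    (NormedSpace.sphere_nonempty.mpr zero_le_one) f.continuous.norm.continuousOn
  have hv1 : ‖v‖ = 1 := by simpa using hv
  refine ⟨v, hv1, le_antisymm ?_ ?_⟩
  · simpa [hv1] using f.le_opNorm v
  · exact f.opNorm_le_of_unit_norm (norm_nonneg _) fun x hx => hmax (by simpa using hx)

theorem LinearMap.det_eq_pow_mul_pow_of_isCompl {𝕜 M : Type*} [Field 𝕜] [AddCommGroup M]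
    [Module 𝕜 M] [FiniteDimensional 𝕜 M] {K L : Submodule 𝕜 M} (h : IsCompl K L)
    {f : M →ₗ[𝕜] M} {a b : 𝕜} (hK : ∀ x ∈ K, f x = a • x) (hL : ∀ x ∈ L, f x = b • x) :
    f.det = a ^ finrank 𝕜 K * b ^ finrank 𝕜 L := by
  set e := Submodule.prodEquivOfIsCompl K L h
  have hconj : (e.symm : M →ₗ[𝕜] K × L) ∘ₗ f ∘ₗ (e : K × L →ₗ[𝕜] M) =
      (a • LinearMap.id).prodMap (b • LinearMap.id) := by
    refine LinearMap.prod_ext (LinearMap.ext fun x => ?_) (LinearMap.ext fun x => ?_)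
    · change e.symm (f ((x : M) + ((0 : L) : M))) = _
      rw [Submodule.coe_zero, add_zero, hK x x.2]
      exact (Submodule.prodEquivOfIsCompl_symm_apply_left K L h (a • x)).trans (by simp)
    · change e.symm (f (((0 : K) : M) + (x : M))) = _
      rw [Submodule.coe_zero, zero_add, hL x x.2]
      exact (Submodule.prodEquivOfIsCompl_symm_apply_right K L h (b • x)).trans (by simp)
  rw [← LinearMap.det_conj f e.symm, LinearEquiv.symm_symm, hconj, LinearMap.det_prodMap,
    LinearMap.det_smul, LinearMap.det_smul, LinearMap.det_id, LinearMap.det_id, mul_one, mul_one]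

theorem exists_orthonormal_forall_of_exists_mem_orthogonal {E : Type*} [NormedAddCommGroup E]
    [InnerProductSpace ℝ E] {P : E → Prop} (k : ℕ)
    (h : ∀ K : Submodule ℝ E, finrank ℝ K < k → ∃ v ∈ Kᗮ, ‖v‖ = 1 ∧ P v) :
    ∃ u : Fin k → E, Orthonormal ℝ u ∧ ∀ i, P (u i) := by
  induction k with
  | zero => exact ⟨Fin.elim0, .of_isEmpty _, nofun⟩
  | succ k ih =>
    obtain ⟨u, hu, hPu⟩ := ih fun K hK => h K (by omega)
    obtain ⟨v, hv, hv1, hPv⟩ := h (Submodule.span ℝ (Set.range u))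
      ((finrank_range_le_card u).trans_lt (by simp))
    refine ⟨Matrix.vecCons v u, orthonormal_vecCons_iff.mpr ⟨hv1, fun i => ?_, hu⟩,
      Fin.cases hPv hPu⟩
    exact Submodule.inner_left_of_mem_orthogonal (Submodule.subset_span (Set.mem_range_self i)) hv

theorem Orthonormal.norm_sum_smul {E ι : Type*} [NormedAddCommGroup E] [InnerProductSpace ℝ E]
    [Fintype ι] {u : ι → E} (hu : Orthonormal ℝ u) (α : ι → ℝ) :
    ‖∑ i, α i • u i‖ = √(∑ i, α i ^ 2) := by
  rw [← Real.sqrt_sq (norm_nonneg _), ← real_inner_self_eq_norm_sq, hu.inner_sum]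
  simp [sq]

section MaximalVolume

variable {E X : Type*} [NormedAddCommGroup E] [InnerProductSpace ℝ E]
  [NormedAddCommGroup X] [NormedSpace ℝ X]

/-- `det S` only makes sense once `X` is identified with `E`; another choice of `g` rescales it
by a nonzero constant. -/
noncomputable def detVia (g : X ≃L[ℝ] E) (S : E →L[ℝ] X) : ℝ := ((g : X →L[ℝ] E) ∘L S).det

theorem detVia_comp (g : X ≃L[ℝ] E) (S : E →L[ℝ] X) (A : E →L[ℝ] E) :
    detVia g (S ∘L A) = detVia g S * A.det := by
  rw [detVia, detVia, ← ContinuousLinearMap.comp_assoc]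
  exact LinearMap.det_comp _ _

variable [FiniteDimensional ℝ E]

theorem exists_isMaxOn_abs_detVia [FiniteDimensional ℝ X] (g : X ≃L[ℝ] E) :
    ∃ T : E →L[ℝ] X, ‖T‖ ≤ 1 ∧ IsMaxOn (|detVia g ·|) (closedBall 0 1) T ∧ detVia g T ≠ 0 := by
  have hcont : Continuous (|detVia g ·|) :=
    (ContinuousLinearMap.continuous_det.comp
      (ContinuousLinearMap.compL ℝ E X E (g : X →L[ℝ] E)).continuous).abs
  obtain ⟨T, hT, hmax⟩ := (isCompact_closedBall (0 : E →L[ℝ] X) 1).exists_isMaxOn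
    ⟨0, mem_closedBall_self zero_le_one⟩ hcont.continuousOn
  refine ⟨T, mem_closedBall_zero_iff.mp hT, hmax, fun h0 => ?_⟩
  set t := (‖(g.symm : E →L[ℝ] X)‖ + 1)⁻¹
  have ht : 0 < t := by positivity
  have hS : t • (g.symm : E →L[ℝ] X) ∈ closedBall 0 1 := by
    rw [mem_closedBall_zero_iff, norm_smul, Real.norm_of_nonneg ht.le]
    calc t * ‖(g.symm : E →L[ℝ] X)‖ ≤ t * (‖(g.symm : E →L[ℝ] X)‖ + 1) := by gcongr; linarith
      _ = 1 := inv_mul_cancel₀ (by positivity)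
  have hdet : detVia g (t • (g.symm : E →L[ℝ] X)) = t ^ finrank ℝ E := by
    simp only [detVia, ContinuousLinearMap.comp_smul, ContinuousLinearEquiv.coe_comp_coe_symm]
    exact (LinearMap.det_smul t LinearMap.id).trans (by simp)
  have := hmax hS
  simp only [Set.mem_ofPred_eq, hdet, h0, abs_zero] at this
  exact (pow_pos ht _).ne' (abs_nonpos_iff.mp this)

theorem norm_comp_smul_starProjection_add_le {T : E →L[ℝ] X} (hT : ‖T‖ ≤ 1) {K : Submodule ℝ E}
    {a b c : ℝ} (ha : 0 ≤ a) (hb : 0 ≤ b) (habc : a ^ 2 + (b * c) ^ 2 ≤ 1)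
    (hTc : ∀ q ∈ Kᗮ, ‖T q‖ ≤ c * ‖q‖) :
    ‖T ∘L (a • K.starProjection + b • Kᗮ.starProjection)‖ ≤ 1 := by
  refine ContinuousLinearMap.opNorm_le_bound _ zero_le_one fun x => ?_
  set p := K.starProjection x
  set q := Kᗮ.starProjection x
  have hx : ‖x‖ ^ 2 = ‖p‖ ^ 2 + ‖q‖ ^ 2 := Submodule.norm_sq_eq_add_norm_sq_starProjection x K
  have hTp : ‖T p‖ ≤ ‖p‖ := (T.le_of_opNorm_le hT p).trans_eq (one_mul _)
  have hTq : ‖T q‖ ≤ c * ‖q‖ := hTc q (Kᗮ.starProjection_apply_mem x)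
  calc ‖(T ∘L (a • K.starProjection + b • Kᗮ.starProjection)) x‖ = ‖a • T p + b • T q‖ := by
        simp [p, q]
    _ ≤ a * ‖T p‖ + b * ‖T q‖ := by
        refine (norm_add_le _ _).trans_eq ?_
        rw [norm_smul, norm_smul, Real.norm_of_nonneg ha, Real.norm_of_nonneg hb]
    _ ≤ a * ‖p‖ + b * c * ‖q‖ := by rw [mul_assoc]; gcongr
    _ ≤ 1 * ‖x‖ := by
        nlinarith [sq_nonneg (a * ‖q‖ - b * c * ‖p‖), norm_nonneg p, norm_nonneg q, norm_nonneg x]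

theorem half_le_of_norm_apply_le_mul_norm {g : X ≃L[ℝ] E} {T : E →L[ℝ] X} (hT : ‖T‖ ≤ 1)
    (hmax : IsMaxOn (|detVia g ·|) (closedBall 0 1) T) (hT0 : detVia g T ≠ 0)
    {K : Submodule ℝ E} (hK : 2 * finrank ℝ K < finrank ℝ E) {c : ℝ} (hc : 0 < c)
    (hTc : ∀ q ∈ Kᗮ, ‖T q‖ ≤ c * ‖q‖) : 1 / 2 ≤ c := by
  by_contra! hc2
  set a : ℝ := (√2)⁻¹
  set b : ℝ := a / c
  have ha : 0 < a := by positivity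
  have ha2 : a ^ 2 = 1 / 2 := by simp [a]
  have hbc : b * c = a := div_mul_cancel₀ a hc.ne'
  set A : E →L[ℝ] E := a • K.starProjection + b • Kᗮ.starProjection
  have hdetA : A.det = a ^ finrank ℝ K * b ^ finrank ℝ Kᗮ :=
    LinearMap.det_eq_pow_mul_pow_of_isCompl K.isCompl_orthogonal
      (fun x hx => by simp [A, Submodule.starProjection_eq_self_iff.mpr hx,
        Submodule.starProjection_orthogonal_apply_eq_zero hx])
      (fun x hx => by simp [A, (K.starProjection_apply_eq_zero_iff).mpr hx,
        Submodule.starProjection_eq_self_iff.mpr hx])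
  have hTA : ‖T ∘L A‖ ≤ 1 :=
    norm_comp_smul_starProjection_add_le hT ha.le (by positivity) (by rw [hbc]; linarith) hTc
  have hgrow : 1 < A.det := by
    have hdim := K.finrank_add_finrank_orthogonal
    have ha1 : a ≤ 1 := by nlinarith
    calc 1 < (1 / 2) ^ finrank ℝ Kᗮ / c ^ finrank ℝ Kᗮ := by
          rw [one_lt_div (by positivity)]
          exact pow_lt_pow_left₀ hc2 hc.le (by omega)
      _ = a ^ (2 * finrank ℝ Kᗮ) / c ^ finrank ℝ Kᗮ := by rw [pow_mul, ha2]
      _ ≤ a ^ (finrank ℝ K + finrank ℝ Kᗮ) / c ^ finrank ℝ Kᗮ := by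
          gcongr ?_ / _
          exact pow_le_pow_of_le_one ha.le ha1 (by omega)
      _ = A.det := by rw [hdetA, pow_add, div_pow]; ring
  have := hmax (mem_closedBall_zero_iff.mpr hTA)
  simp only [Set.mem_ofPred_eq, detVia_comp, abs_mul] at this
  have hpos : 0 < |detVia g T| := abs_pos.mpr hT0
  nlinarith [abs_of_pos (hgrow.trans' zero_lt_one)]

theorem exists_mem_orthogonal_norm_eq_one_half_le_norm_apply {g : X ≃L[ℝ] E} {T : E →L[ℝ] X}
    (hT : ‖T‖ ≤ 1) (hmax : IsMaxOn (|detVia g ·|) (closedBall 0 1) T) (hT0 : detVia g T ≠ 0)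
    {K : Submodule ℝ E} (hK : 2 * finrank ℝ K < finrank ℝ E) :
    ∃ v ∈ Kᗮ, ‖v‖ = 1 ∧ 1 / 2 ≤ ‖T v‖ := by
  have : Nontrivial Kᗮ :=
    Module.nontrivial_of_finrank_pos (R := ℝ) (by have := K.finrank_add_finrank_orthogonal; omega)
  set f := T ∘L Kᗮ.subtypeL
  obtain ⟨v, hv1, hfv⟩ := f.exists_norm_eq_one_norm_apply_eq_opNorm
  have hf : 1 / 2 ≤ ‖f‖ := le_of_forall_gt_imp_ge_of_dense fun c hc =>
    half_le_of_norm_apply_le_mul_norm hT hmax hT0 hK ((norm_nonneg f).trans_lt hc)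
      fun q hq => (f.le_opNorm ⟨q, hq⟩).trans (mul_le_mul_of_nonneg_right hc.le (norm_nonneg q))
  exact ⟨v, v.2, hv1, hf.trans_eq hfv.symm⟩

end MaximalVolume

/-- Dvoretzky–Rogers Lemma: in every `2n`-dimensional normed space there are
`n` vectors in the unit ball of norm at least `1/2` on which the natural
ℓ₂-estimate holds. -/
theorem dvoretzky_rogers_lemma
    {X : Type} [NormedAddCommGroup X] [NormedSpace ℝ X]
    (n : ℕ) (hn : 1 ≤ n) (hdim : Module.finrank ℝ X = 2 * n) :
    ∃ x : Fin n → X,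
      (∀ i, ‖x i‖ ≤ 1) ∧ (∀ i, (1 : ℝ) / 2 ≤ ‖x i‖) ∧
      ∀ α : Fin n → ℝ,
        ‖∑ i, α i • x i‖ ≤ Real.sqrt (∑ i, |α i| ^ 2) := by
  have : FiniteDimensional ℝ X := .of_finrank_pos (by omega)
  let g : X ≃L[ℝ] EuclideanSpace ℝ (Fin (2 * n)) := .ofFinrankEq (by simp [hdim])
  obtain ⟨T, hT, hmax, hT0⟩ := exists_isMaxOn_abs_detVia g
  obtain ⟨u, hu, hTu⟩ := exists_orthonormal_forall_of_exists_mem_orthogonal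
    (P := fun v => 1 / 2 ≤ ‖T v‖) n fun K hK =>
      exists_mem_orthogonal_norm_eq_one_half_le_norm_apply hT hmax hT0 (by simp; omega)
  refine ⟨fun i => T (u i), fun i => ?_, hTu, fun α => ?_⟩
  · simpa [hu.norm_eq_one] using T.le_of_opNorm_le hT (u i)
  · calc ‖∑ i, α i • T (u i)‖ = ‖T (∑ i, α i • u i)‖ := by simp
      _ ≤ ‖∑ i, α i • u i‖ := (T.le_of_opNorm_le hT _).trans_eq (one_mul _)
      _ = √(∑ i, |α i| ^ 2) := by simp [hu.norm_sum_smul]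
end

section
/- An operator T : ℓ₂ → ℓ₂ between separable Hilbert spaces is p-summing (for 1 ≤ p < ∞) if and only if it is a Hilbert–Schmidt operator, i.e., Σₙ ‖T eₙ‖² < ∞ for an orthonormal basis (eₙ). -/
/-!
A Hilbert–Schmidt operator `T` is `1`-summing: since `‖T x‖² = ∑ₙ ⟪x, T† eₙ⟫²`, Khintchine's
inequality bounds `‖T x‖` by a constant times the average over sign vectors `ε` of
`|⟪x, ∑ₙ εₙ T† eₙ⟫|`, and testing the family against these `2 ^ N` vectors costs only their
average norm, which is at most `(∑ₙ ‖T† eₙ‖²) ^ (1/2) ≤ (∑ₙ ‖T eₙ‖²) ^ (1/2)`. By the inclusion theorem (`p`-summing implies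
`q`-summing for `q ≥ p`) it is then `p`-summing for every `p ≥ 1`.

Conversely a `p`-summing operator is `2k`-summing for an integer `k ≥ p / 2`. Test this on the
`2 ^ m` vectors `∑_{j<m} εⱼ eⱼ`: by Jensen the left side is at least `2 ^ m (∑_{j<m} ‖T eⱼ‖²) ^ k`,
while the sub-Gaussian moment bound for Rademacher sums gives every functional of norm `≤ 1` a
`2k`-th moment at most `4 (2k)!` on them. So the partial Hilbert–Schmidt sums are bounded.
-/

def IsPSumming {X Y : Type} [NormedAddCommGroup X] [NormedSpace ℝ X]
    [NormedAddCommGroup Y] [NormedSpace ℝ Y]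
    (p : ℝ) (T : X →L[ℝ] Y) (c : ℝ) : Prop :=
  ∀ (n : ℕ) (x : Fin n → X),
    (∑ i, ‖T (x i)‖ ^ p) ^ (1 / p) ≤
      c * ⨆ f : {f : X →L[ℝ] ℝ // ‖f‖ ≤ 1}, (∑ i, |f.1 (x i)| ^ p) ^ (1 / p)

open Finset Real
open scoped RealInnerProductSpace Nat

lemma pow_div_factorial_le_exp_add_exp_neg {n : ℕ} (hn : Even n) (y : ℝ) :
    y ^ n / n ! ≤ exp y + exp (-y) := by
  rw [← hn.pow_abs]
  refine (pow_div_factorial_le_exp |y| (abs_nonneg y) n).trans ?_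
  rcases abs_choice y with h | h <;> rw [h] <;> linarith [exp_pos y, exp_pos (-y)]

lemma sum_sq_pow_three_le {ι : Type*} (s : Finset ι) (X : ι → ℝ) :
    (∑ i ∈ s, X i ^ 2) ^ 3 ≤ (∑ i ∈ s, |X i|) ^ 2 * ∑ i ∈ s, X i ^ 4 := by
  set A := ∑ i ∈ s, |X i|
  set B := ∑ i ∈ s, X i ^ 2
  set C := ∑ i ∈ s, X i ^ 4
  set D := ∑ i ∈ s, |X i| ^ 3
  have hBAD : B ^ 2 ≤ A * D := sum_sq_le_sum_mul_sum_of_sq_le_mul s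
    (fun i _ => abs_nonneg _) (fun i _ => by positivity)
    (fun i _ => le_of_eq (by rw [← sq_abs (X i)]; ring))
  have hDBC : D ^ 2 ≤ B * C := sum_sq_le_sum_mul_sum_of_sq_le_mul s
    (fun i _ => sq_nonneg _) (fun i _ => by positivity)
    (fun i _ => le_of_eq (by rw [show X i ^ 4 = (X i ^ 2) ^ 2 by ring, ← sq_abs (X i)]; ring))
  have hB : 0 ≤ B := sum_nonneg fun i _ => sq_nonneg _
  rcases hB.eq_or_lt with hB0 | hB0
  · rw [← hB0, zero_pow three_ne_zero]
    exact mul_nonneg (sq_nonneg A) (sum_nonneg fun i _ => by positivity)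
  have : B ^ 3 * B ≤ A ^ 2 * C * B := by
    calc B ^ 3 * B = (B ^ 2) ^ 2 := by ring
      _ ≤ (A * D) ^ 2 := pow_le_pow_left₀ (sq_nonneg B) hBAD 2
      _ = A ^ 2 * D ^ 2 := by ring
      _ ≤ A ^ 2 * (B * C) := mul_le_mul_of_nonneg_left hDBC (sq_nonneg A)
      _ = A ^ 2 * C * B := by ring
  exact le_of_mul_le_mul_right this hB0

lemma sum_rpow_mul_rpow_le {ι : Type*} (s : Finset ι) {u v : ι → ℝ} (hu : ∀ i ∈ s, 0 ≤ u i)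
    (hv : ∀ i ∈ s, 0 ≤ v i) {p q : ℝ} (hp : 0 < p) (hpq : p < q) :
    ∑ i ∈ s, u i ^ (q - p) * v i ^ p
      ≤ (∑ i ∈ s, u i ^ q) ^ ((q - p) / q) * (∑ i ∈ s, v i ^ q) ^ (p / q) := by
  have hq : 0 < q := hp.trans hpq
  have conj : (q / (q - p)).HolderConjugate (q / p) := holderConjugate_iff.mpr
    ⟨by rw [one_lt_div (by linarith)]; linarith, by field_simp; ring⟩
  convert inner_le_Lp_mul_Lq_of_nonneg s conj (f := fun i => u i ^ (q - p))
    (g := fun i => v i ^ p) (fun i hi => rpow_nonneg (hu i hi) _)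
    (fun i hi => rpow_nonneg (hv i hi) _) using 3
  · refine sum_congr rfl fun i hi => ?_
    rw [← rpow_mul (hu i hi), mul_div_cancel₀ _ (by linarith)]
  · field_simp
  · refine sum_congr rfl fun i hi => ?_
    rw [← rpow_mul (hv i hi), mul_div_cancel₀ _ hp.ne']
  · field_simp

namespace Rademacher

def boolSign (b : Bool) : ℝ := if b then 1 else -1

def rademacherSum {E : Type*} [AddCommGroup E] [Module ℝ E] {N : ℕ}
    (ε : Fin N → Bool) (a : Fin N → E) : E :=
  ∑ n, boolSign (ε n) • a n

variable {E : Type*} {N : ℕ}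

lemma sum_signVectors_succ {M : Type*} [AddCommMonoid M] (f : (Fin (N + 1) → Bool) → M) :
    ∑ ε, f ε = ∑ b, ∑ ε, f (Fin.cons b ε) := by
  rw [← (Fin.consEquiv fun _ => Bool).sum_comp f, Fintype.sum_prod_type]
  rfl

lemma rademacherSum_cons [AddCommGroup E] [Module ℝ E] (b : Bool) (ε : Fin N → Bool)
    (a : Fin (N + 1) → E) :
    rademacherSum (Fin.cons b ε) a = boolSign b • a 0 + rademacherSum ε (Fin.tail a) := by
  simp [rademacherSum, Fin.sum_univ_succ, Fin.tail]

lemma map_rademacherSum {F : Type*} [NormedAddCommGroup E] [NormedSpace ℝ E]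
    [NormedAddCommGroup F] [NormedSpace ℝ F] (f : E →L[ℝ] F) (ε : Fin N → Bool)
    (a : Fin N → E) : f (rademacherSum ε a) = rademacherSum ε (f ∘ a) := by
  simp [rademacherSum]

lemma sum_norm_rademacherSum_sq [NormedAddCommGroup E] [InnerProductSpace ℝ E]
    (a : Fin N → E) : ∑ ε, ‖rademacherSum ε a‖ ^ 2 = 2 ^ N * ∑ n, ‖a n‖ ^ 2 := by
  induction N with
  | zero => simp [rademacherSum]
  | succ N ih =>
    have parallelogram : ∀ y : E,
        ∑ b, ‖boolSign b • a 0 + y‖ ^ 2 = 2 * ‖a 0‖ ^ 2 + 2 * ‖y‖ ^ 2 := fun y => by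
      simp only [Fintype.sum_bool, boolSign, if_true, Bool.false_eq_true, if_false, one_smul,
        neg_one_smul, norm_add_sq_real, norm_neg, inner_neg_left]
      ring
    simp only [sum_signVectors_succ, rademacherSum_cons]
    rw [sum_comm]
    simp only [parallelogram, sum_add_distrib, ← mul_sum, ih, sum_const, card_univ,
      Fintype.card_fun, Fintype.card_bool, Fintype.card_fin, Fin.sum_univ_succ (fun n => ‖a n‖ ^ 2)]
    simp only [Fin.tail, nsmul_eq_mul]
    push_cast
    ring

lemma sum_exp_rademacherSum_le (a : Fin N → ℝ) (t : ℝ) :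
    ∑ ε, exp (t * rademacherSum ε a) ≤ 2 ^ N * exp (t ^ 2 * (∑ n, a n ^ 2) / 2) := by
  have factor : ∑ ε : Fin N → Bool, exp (t * rademacherSum ε a)
      = ∏ n, ∑ b, exp (t * (boolSign b * a n)) := by
    rw [Fintype.prod_sum]
    simp [rademacherSum, mul_sum, exp_sum]
  have cosh_bound : ∀ n, ∑ b, exp (t * (boolSign b * a n)) ≤ 2 * exp (t ^ 2 * a n ^ 2 / 2) := by
    intro n
    have := cosh_le_exp_half_sq (t * a n)
    rw [cosh_eq] at this
    simp only [Fintype.sum_bool, boolSign, if_true, Bool.false_eq_true, if_false]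
    rw [mul_pow] at this
    ring_nf at this ⊢
    linarith
  calc ∑ ε : Fin N → Bool, exp (t * rademacherSum ε a)
      ≤ ∏ n, (2 * exp (t ^ 2 * a n ^ 2 / 2)) := by
        rw [factor]
        exact prod_le_prod (fun n _ => sum_nonneg fun b _ => (exp_pos _).le)
          fun n _ => cosh_bound n
    _ = 2 ^ N * exp (t ^ 2 * (∑ n, a n ^ 2) / 2) := by
        rw [prod_mul_distrib, prod_const, card_univ, Fintype.card_fin, ← exp_sum]
        congr 2
        rw [mul_sum, sum_div]

lemma sum_rademacherSum_pow_le (a : Fin N → ℝ) (j : ℕ) :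
    ∑ ε, rademacherSum ε a ^ (2 * j) ≤ 4 * 2 ^ N * (2 * j)! * (∑ n, a n ^ 2) ^ j := by
  set σ := ∑ n, a n ^ 2
  rcases (sum_nonneg fun n _ => sq_nonneg (a n) : 0 ≤ σ).eq_or_lt with hσ | hσ
  · have ha : a = 0 := funext fun n => pow_eq_zero_iff two_ne_zero |>.mp <|
      (sum_eq_zero_iff_of_nonneg fun n _ => sq_nonneg (a n)).mp hσ.symm n (mem_univ n)
    rcases j.eq_zero_or_pos with rfl | hj
    · simp
    · simp [rademacherSum, ha, zero_pow (by omega : 2 * j ≠ 0)]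
      positivity
  -- Chernoff: `(tX) ^ 2j / (2j)! ≤ e^(tX) + e^(-tX)`, the exponential moments of `X` are
  -- sub-Gaussian, and `t = σ ^ (-1/2)` balances the two.
  set t := (√σ)⁻¹
  have ht : t ^ 2 * σ = 1 := by
    rw [inv_pow, sq_sqrt hσ.le, inv_mul_cancel₀ hσ.ne']
  have pointwise : ∀ ε, rademacherSum ε a ^ (2 * j)
      = (2 * j)! * σ ^ j * ((t * rademacherSum ε a) ^ (2 * j) / (2 * j)!) := fun ε => by
    have : (t ^ 2) ^ j * σ ^ j = 1 := by rw [← mul_pow, ht, one_pow]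
    rw [mul_pow, pow_mul t]
    field_simp
    linear_combination (-rademacherSum ε a ^ (2 * j)) * this
  have two_sided : ∑ ε, ((t * rademacherSum ε a) ^ (2 * j) / (2 * j)!)
      ≤ 2 * 2 ^ N * exp (1 / 2) := by
    calc _ ≤ ∑ ε, (exp (t * rademacherSum ε a) + exp ((-t) * rademacherSum ε a)) :=
          sum_le_sum fun ε _ => by
            rw [neg_mul]; exact pow_div_factorial_le_exp_add_exp_neg (even_two_mul j) _
      _ ≤ 2 ^ N * exp (t ^ 2 * σ / 2) + 2 ^ N * exp ((-t) ^ 2 * σ / 2) := by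
          rw [sum_add_distrib]
          exact add_le_add (sum_exp_rademacherSum_le a t) (sum_exp_rademacherSum_le a (-t))
      _ = 2 * 2 ^ N * exp (1 / 2) := by rw [neg_sq, ht]; ring
  calc ∑ ε, rademacherSum ε a ^ (2 * j)
      = (2 * j)! * σ ^ j * ∑ ε, ((t * rademacherSum ε a) ^ (2 * j) / (2 * j)!) := by
        rw [mul_sum]; exact sum_congr rfl fun ε _ => pointwise ε
    _ ≤ (2 * j)! * σ ^ j * (2 * 2 ^ N * 2) := by
        gcongr
        have sq_exp_half : exp (1 / 2) ^ 2 = exp 1 := by rw [← exp_nat_mul]; norm_num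
        have exp_half : exp (1 / 2) ≤ 2 := by nlinarith [exp_one_lt_d9, exp_pos (1 / 2)]
        exact two_sided.trans (by gcongr)
    _ = 4 * 2 ^ N * (2 * j)! * σ ^ j := by ring

lemma khintchine (a : Fin N → ℝ) :
    2 ^ N * √(∑ n, a n ^ 2) ≤ √96 * ∑ ε, |rademacherSum ε a| := by
  set σ := ∑ n, a n ^ 2
  set A := ∑ ε, |rademacherSum ε a|
  have second := sum_norm_rademacherSum_sq a
  simp only [Real.norm_eq_abs, sq_abs] at second
  have hσ : 0 ≤ σ := sum_nonneg fun n _ => sq_nonneg _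
  have key : (2 ^ N) ^ 2 * σ ≤ 96 * A ^ 2 := by
    rcases hσ.eq_or_lt with hσ0 | hσ0
    · rw [← hσ0, mul_zero]; positivity
    have h := sum_sq_pow_three_le univ fun ε => rademacherSum ε a
    rw [second] at h
    have h' : (2 ^ N) ^ 2 * σ * (2 ^ N * σ ^ 2) ≤ 96 * A ^ 2 * (2 ^ N * σ ^ 2) := by
      calc (2 ^ N) ^ 2 * σ * (2 ^ N * σ ^ 2) = (2 ^ N * σ) ^ 3 := by ring
        _ ≤ A ^ 2 * ∑ ε, rademacherSum ε a ^ 4 := h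
        _ ≤ A ^ 2 * (4 * 2 ^ N * (2 * 2)! * σ ^ 2) :=
            mul_le_mul_of_nonneg_left (sum_rademacherSum_pow_le a 2) (sq_nonneg A)
        _ = 96 * A ^ 2 * (2 ^ N * σ ^ 2) := by norm_num [Nat.factorial]; ring
    exact le_of_mul_le_mul_right h' (by positivity)
  calc 2 ^ N * √σ = √((2 ^ N) ^ 2 * σ) := by
        rw [sqrt_mul (by positivity), sqrt_sq (by positivity)]
    _ ≤ √(96 * A ^ 2) := sqrt_le_sqrt key
    _ = √96 * A := by rw [sqrt_mul (by norm_num), sqrt_sq (sum_nonneg fun ε _ => abs_nonneg _)]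

end Rademacher

section WeakNorm

variable {X Y : Type} [NormedAddCommGroup X] [NormedSpace ℝ X]
  [NormedAddCommGroup Y] [NormedSpace ℝ Y] {p : ℝ} {n : ℕ}

noncomputable def weakLpNorm (p : ℝ) (x : Fin n → X) : ℝ :=
  ⨆ f : {f : X →L[ℝ] ℝ // ‖f‖ ≤ 1}, (∑ i, |f.1 (x i)| ^ p) ^ (1 / p)

lemma weakLpNorm_nonneg (x : Fin n → X) : 0 ≤ weakLpNorm p x :=
  iSup_nonneg fun _ => rpow_nonneg (sum_nonneg fun _ _ => rpow_nonneg (abs_nonneg _) _) _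

lemma rpow_le_weakLpNorm (hp : 0 ≤ p) (x : Fin n → X) {f : X →L[ℝ] ℝ} (hf : ‖f‖ ≤ 1) :
    (∑ i, |f (x i)| ^ p) ^ (1 / p) ≤ weakLpNorm p x := by
  refine le_ciSup (f := fun f : {f : X →L[ℝ] ℝ // ‖f‖ ≤ 1} => (∑ i, |f.1 (x i)| ^ p) ^ (1 / p))
    ⟨(∑ i, ‖x i‖ ^ p) ^ (1 / p), ?_⟩ ⟨f, hf⟩
  rintro - ⟨g, rfl⟩
  show (∑ i, |g.1 (x i)| ^ p) ^ (1 / p) ≤ _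
  gcongr with i
  calc |g.1 (x i)| = ‖g.1 (x i)‖ := (norm_eq_abs _).symm
    _ ≤ ‖g.1‖ * ‖x i‖ := g.1.le_opNorm _
    _ ≤ ‖x i‖ := mul_le_of_le_one_left (norm_nonneg _) g.2

lemma sum_rpow_le_weakLpNorm_rpow (hp : 0 < p) (x : Fin n → X) {f : X →L[ℝ] ℝ}
    (hf : ‖f‖ ≤ 1) : ∑ i, |f (x i)| ^ p ≤ weakLpNorm p x ^ p := by
  rw [← rpow_inv_le_iff_of_pos (sum_nonneg fun _ _ => by positivity) (weakLpNorm_nonneg x) hp,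
    ← one_div]
  exact rpow_le_weakLpNorm hp.le x hf

lemma weakLpNorm_rpow_le (hp : 0 < p) (x : Fin n → X) {B : ℝ} (hB : 0 ≤ B)
    (h : ∀ f : X →L[ℝ] ℝ, ‖f‖ ≤ 1 → ∑ i, |f (x i)| ^ p ≤ B) : weakLpNorm p x ^ p ≤ B := by
  have : Nonempty {f : X →L[ℝ] ℝ // ‖f‖ ≤ 1} := ⟨⟨0, by simp⟩⟩
  rw [← le_rpow_inv_iff_of_pos (weakLpNorm_nonneg x) hB hp]
  refine ciSup_le fun f => ?_
  rw [one_div]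
  exact rpow_le_rpow (sum_nonneg fun _ _ => by positivity) (h f.1 f.2) (inv_nonneg.mpr hp.le)

lemma sum_abs_le_opNorm_mul_weakLpNorm_one (x : Fin n → X) (f : X →L[ℝ] ℝ) :
    ∑ i, |f (x i)| ≤ ‖f‖ * weakLpNorm 1 x := by
  rcases (norm_nonneg f).eq_or_lt with hf | hf
  · simp [norm_eq_zero.mp hf.symm]
  have unit : ‖‖f‖⁻¹ • f‖ ≤ 1 := by rw [norm_smul, norm_inv, norm_norm, inv_mul_cancel₀ hf.ne']
  have := rpow_le_weakLpNorm zero_le_one x unit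
  simp only [rpow_one, div_one, FunLike.coe_smul, Pi.smul_apply, smul_eq_mul, abs_mul,
    abs_inv, abs_norm, ← mul_sum] at this
  rwa [inv_mul_le_iff₀ hf] at this

lemma isPSumming_iff_sum_rpow_le (hp : 0 < p) (T : X →L[ℝ] Y) {c : ℝ} (hc : 0 ≤ c) :
    IsPSumming p T c ↔
      ∀ (n : ℕ) (x : Fin n → X), ∑ i, ‖T (x i)‖ ^ p ≤ (c * weakLpNorm p x) ^ p := by
  refine forall₂_congr fun n x => ?_
  change (∑ i, ‖T (x i)‖ ^ p) ^ (1 / p) ≤ c * weakLpNorm p x ↔ _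
  rw [one_div, rpow_inv_le_iff_of_pos (sum_nonneg fun _ _ => by positivity)
    (mul_nonneg hc (weakLpNorm_nonneg x)) hp]

lemma weakLpNorm_rpow_smul_le {q : ℝ} (hp : 0 < p) (hpq : p < q) (x : Fin n → X)
    {b : Fin n → ℝ} (hb : ∀ i, 0 ≤ b i) :
    weakLpNorm p (fun i => b i ^ ((q - p) / p) • x i) ^ p
      ≤ (∑ i, b i ^ q) ^ ((q - p) / q) * weakLpNorm q x ^ p := by
  have hq : 0 < q := hp.trans hpq
  have hB : 0 ≤ (∑ i, b i ^ q) ^ ((q - p) / q) :=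
    rpow_nonneg (sum_nonneg fun i _ => rpow_nonneg (hb i) q) _
  refine weakLpNorm_rpow_le hp _ (mul_nonneg hB (rpow_nonneg (weakLpNorm_nonneg x) _))
    fun f hf => ?_
  calc ∑ i, |f (b i ^ ((q - p) / p) • x i)| ^ p = ∑ i, b i ^ (q - p) * |f (x i)| ^ p :=
        sum_congr rfl fun i _ => by
          rw [map_smul, smul_eq_mul, abs_mul, abs_of_nonneg (rpow_nonneg (hb i) _),
            mul_rpow (rpow_nonneg (hb i) _) (abs_nonneg _), ← rpow_mul (hb i),
            div_mul_cancel₀ _ hp.ne']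
    _ ≤ (∑ i, b i ^ q) ^ ((q - p) / q) * (∑ i, |f (x i)| ^ q) ^ (p / q) :=
        sum_rpow_mul_rpow_le univ (fun i _ => hb i) (fun i _ => abs_nonneg _) hp hpq
    _ ≤ (∑ i, b i ^ q) ^ ((q - p) / q) * (weakLpNorm q x ^ q) ^ (p / q) :=
        mul_le_mul_of_nonneg_left (rpow_le_rpow (sum_nonneg fun i _ => by positivity)
          (sum_rpow_le_weakLpNorm_rpow hq x hf) (by positivity)) hB
    _ = (∑ i, b i ^ q) ^ ((q - p) / q) * weakLpNorm q x ^ p := by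
        rw [← rpow_mul (weakLpNorm_nonneg x), mul_div_cancel₀ _ hq.ne']

theorem IsPSumming.mono_exponent {T : X →L[ℝ] Y} {q c : ℝ} (hp : 0 < p) (hpq : p ≤ q)
    (hc : 0 ≤ c) (h : IsPSumming p T c) : IsPSumming q T c := by
  rcases hpq.eq_or_lt with rfl | hpq
  · exact h
  have hq : 0 < q := hp.trans hpq
  rw [isPSumming_iff_sum_rpow_le hp T hc] at h
  rw [isPSumming_iff_sum_rpow_le hq T hc]
  intro n x
  set b : Fin n → ℝ := fun i => ‖T (x i)‖
  set B := ∑ i, b i ^ q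
  set S := weakLpNorm q x
  have hb : ∀ i, 0 ≤ b i := fun i => norm_nonneg _
  have hB : 0 ≤ B := sum_nonneg fun i _ => rpow_nonneg (hb i) q
  have hS : 0 ≤ S := weakLpNorm_nonneg x
  -- Reweighting by `‖T xᵢ‖ ^ ((q - p) / p)` turns `∑ ‖T yᵢ‖ ^ p` into `∑ ‖T xᵢ‖ ^ q`.
  set y : Fin n → X := fun i => b i ^ ((q - p) / p) • x i
  have hTy : ∑ i, ‖T (y i)‖ ^ p = B := sum_congr rfl fun i _ => by
    rw [map_smul, norm_smul, norm_of_nonneg (rpow_nonneg (hb i) _),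
      mul_rpow (rpow_nonneg (hb i) _) (hb i), ← rpow_mul (hb i), div_mul_cancel₀ _ hp.ne',
      ← rpow_add' (hb i) (by linarith)]
    ring_nf
  have weak_y : weakLpNorm p y ^ p ≤ B ^ ((q - p) / q) * S ^ p :=
    weakLpNorm_rpow_smul_le hp hpq x hb
  rcases hB.eq_or_lt with hB0 | hB0
  · rw [← hB0]; positivity
  have hBp : B ^ (p / q) * B ^ ((q - p) / q) ≤ (c * S) ^ p * B ^ ((q - p) / q) := by
    calc B ^ (p / q) * B ^ ((q - p) / q) = B := by
          rw [← rpow_add hB0, show p / q + (q - p) / q = 1 by field_simp; ring, rpow_one]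
      _ ≤ (c * weakLpNorm p y) ^ p := by rw [← hTy]; exact h n y
      _ = c ^ p * weakLpNorm p y ^ p := mul_rpow hc (weakLpNorm_nonneg y)
      _ ≤ c ^ p * (B ^ ((q - p) / q) * S ^ p) := by gcongr
      _ = (c * S) ^ p * B ^ ((q - p) / q) := by rw [mul_rpow hc hS]; ring
  have := rpow_le_rpow (by positivity) (le_of_mul_le_mul_right hBp (by positivity))
    (div_nonneg hq.le hp.le : 0 ≤ q / p)
  rwa [← rpow_mul hB, ← rpow_mul (by positivity), div_mul_div_cancel₀ hq.ne',
    div_self hp.ne', rpow_one, mul_div_cancel₀ _ hp.ne'] at this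

end WeakNorm

section Forward

open Rademacher

variable {E F : Type} [NormedAddCommGroup E] [InnerProductSpace ℝ E]
  [NormedAddCommGroup F] [InnerProductSpace ℝ F]

lemma Orthonormal.sum_sq_apply_le {ι : Type*} {v : ι → E} (hv : Orthonormal ℝ v)
    (f : E →L[ℝ] ℝ) (s : Finset ι) : ∑ i ∈ s, f (v i) ^ 2 ≤ ‖f‖ ^ 2 := by
  set Q := ∑ i ∈ s, f (v i) ^ 2
  set z := ∑ i ∈ s, f (v i) • v i
  have hz : ‖z‖ ^ 2 = Q := by
    rw [← real_inner_self_eq_norm_sq, hv.inner_sum]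
    simp [Q, sq]
  have hfz : f z = Q := by simp [z, Q, sq]
  have hQ : 0 ≤ Q := sum_nonneg fun i _ => sq_nonneg _
  have : Q ^ 2 ≤ ‖f‖ ^ 2 * Q := by
    calc Q ^ 2 = (f z) ^ 2 := by rw [hfz]
      _ ≤ (‖f‖ * ‖z‖) ^ 2 := by
          rw [← sq_abs]
          exact pow_le_pow_left₀ (abs_nonneg _) (f.le_opNorm z) 2
      _ = ‖f‖ ^ 2 * Q := by rw [mul_pow, hz]
  rcases hQ.eq_or_lt with hQ0 | hQ0
  · rw [← hQ0]; positivity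
  nlinarith

theorem IsPSumming.sum_norm_sq_pow_le {T : E →L[ℝ] F} {k : ℕ} {c : ℝ} (hc : 0 ≤ c)
    (h : IsPSumming (2 * k) T c) {m : ℕ} {v : Fin m → E} (hv : Orthonormal ℝ v) :
    (∑ j, ‖T (v j)‖ ^ 2) ^ k ≤ 4 * (2 * k)! * c ^ (2 * k) := by
  rcases k.eq_zero_or_pos with rfl | hk
  · norm_num
  have cast : ((2 * k : ℕ) : ℝ) = 2 * k := by push_cast; ring
  rw [← cast, isPSumming_iff_sum_rpow_le (by positivity) T hc] at h
  simp only [rpow_natCast] at h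
  set M : ℝ := 2 ^ m
  have card : Fintype.card (Fin m → Bool) = 2 ^ m := by simp
  set e : Fin (2 ^ m) ≃ (Fin m → Bool) := (Fintype.equivFinOfCardEq card).symm
  set x : Fin (2 ^ m) → E := fun q => rademacherSum (e q) v
  have weak : weakLpNorm (2 * k : ℕ) x ^ (2 * k) ≤ 4 * M * (2 * k)! := by
    rw [← rpow_natCast]
    refine weakLpNorm_rpow_le (by positivity) x (by positivity) fun f hf => ?_
    simp only [rpow_natCast, x, map_rademacherSum, (even_two_mul k).pow_abs]
    rw [e.sum_comp (fun ε => rademacherSum ε (f ∘ v) ^ (2 * k))]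
    calc _ ≤ 4 * M * (2 * k)! * (∑ j, f (v j) ^ 2) ^ k := sum_rademacherSum_pow_le _ k
      _ ≤ 4 * M * (2 * k)! * 1 := by
          gcongr
          refine pow_le_one₀ (sum_nonneg fun j _ => sq_nonneg _) ?_
          exact (hv.sum_sq_apply_le f univ).trans (by nlinarith [norm_nonneg f])
      _ = 4 * M * (2 * k)! := mul_one _
  have second : ∑ q, ‖T (x q)‖ ^ 2 = M * ∑ j, ‖T (v j)‖ ^ 2 := by
    simp only [x, map_rademacherSum]
    rw [e.sum_comp (fun ε => ‖rademacherSum ε (T ∘ v)‖ ^ 2), sum_norm_rademacherSum_sq]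
    rfl
  have jensen := pow_sum_le_card_mul_sum_pow (s := univ) (f := fun q => ‖T (x q)‖ ^ 2)
    (fun q _ => sq_nonneg _) (k - 1)
  rw [Nat.sub_add_cancel hk, second, card_univ, Fintype.card_fin] at jensen
  push_cast at jensen
  have : M ^ k * (∑ j, ‖T (v j)‖ ^ 2) ^ k ≤ M ^ k * (4 * (2 * k)! * c ^ (2 * k)) := by
    calc M ^ k * (∑ j, ‖T (v j)‖ ^ 2) ^ k ≤ M ^ (k - 1) * ∑ q, (‖T (x q)‖ ^ 2) ^ k := by
          rw [← mul_pow]; exact jensen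
      _ = M ^ (k - 1) * ∑ q, ‖T (x q)‖ ^ (2 * k) := by simp only [← pow_mul]
      _ ≤ M ^ (k - 1) * (c * weakLpNorm (2 * k : ℕ) x) ^ (2 * k) := by gcongr; exact h _ x
      _ ≤ M ^ (k - 1) * (c ^ (2 * k) * (4 * M * (2 * k)!)) := by rw [mul_pow]; gcongr
      _ = M ^ (k - 1 + 1) * (4 * (2 * k)! * c ^ (2 * k)) := by ring
      _ = M ^ k * (4 * (2 * k)! * c ^ (2 * k)) := by rw [Nat.sub_add_cancel hk]
  exact le_of_mul_le_mul_left this (by positivity)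

end Forward

section Backward

open Rademacher Filter Topology
open scoped InnerProduct

variable {E F : Type} [NormedAddCommGroup E] [InnerProductSpace ℝ E]

lemma sum_sqrt_sum_inner_sq_le {N r : ℕ} (w : Fin N → E) (x : Fin r → E) :
    ∑ i, √(∑ n, ⟪x i, w n⟫ ^ 2) ≤ √96 * √(∑ n, ‖w n‖ ^ 2) * weakLpNorm 1 x := by
  set S := weakLpNorm 1 x
  have inner_eq : ∀ i ε, ⟪x i, rademacherSum ε w⟫ = rademacherSum ε fun n => ⟪x i, w n⟫ :=
    fun i ε => by simp [rademacherSum, inner_sum, real_inner_smul_right]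
  have dual : ∀ ε, ∑ i, |⟪x i, rademacherSum ε w⟫| ≤ ‖rademacherSum ε w‖ * S := fun ε => by
    simpa [innerSL_apply_norm, real_inner_comm] using
      sum_abs_le_opNorm_mul_weakLpNorm_one x (innerSL ℝ (rademacherSum ε w))
  have cauchy_schwarz : ∑ ε, ‖rademacherSum ε w‖ ≤ 2 ^ N * √(∑ n, ‖w n‖ ^ 2) := by
    have h := sq_sum_le_card_mul_sum_sq (s := univ) (f := fun ε => ‖rademacherSum ε w‖)
    rw [sum_norm_rademacherSum_sq, card_univ] at h
    simp only [Fintype.card_fun, Fintype.card_bool, Fintype.card_fin, Nat.cast_pow,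
      Nat.cast_ofNat] at h
    calc ∑ ε, ‖rademacherSum ε w‖ ≤ √(2 ^ N * (2 ^ N * ∑ n, ‖w n‖ ^ 2)) :=
          (le_sqrt (sum_nonneg fun ε _ => norm_nonneg _) (by positivity)).mpr h
      _ = 2 ^ N * √(∑ n, ‖w n‖ ^ 2) := by
          rw [← mul_assoc, ← sq, sqrt_mul (by positivity), sqrt_sq (by positivity)]
  have hS : 0 ≤ S := weakLpNorm_nonneg x
  have : 2 ^ N * ∑ i, √(∑ n, ⟪x i, w n⟫ ^ 2)
      ≤ 2 ^ N * (√96 * √(∑ n, ‖w n‖ ^ 2) * S) := by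
    calc 2 ^ N * ∑ i, √(∑ n, ⟪x i, w n⟫ ^ 2)
        ≤ ∑ i, √96 * ∑ ε, |⟪x i, rademacherSum ε w⟫| := by
          rw [mul_sum]
          refine sum_le_sum fun i _ => ?_
          simpa only [inner_eq] using khintchine fun n => ⟪x i, w n⟫
      _ = √96 * ∑ ε, ∑ i, |⟪x i, rademacherSum ε w⟫| := by rw [← mul_sum, sum_comm]
      _ ≤ √96 * ∑ ε, ‖rademacherSum ε w‖ * S := by gcongr with ε; exact dual ε
      _ ≤ √96 * (2 ^ N * √(∑ n, ‖w n‖ ^ 2) * S) := by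
          rw [← sum_mul]; gcongr
      _ = 2 ^ N * (√96 * √(∑ n, ‖w n‖ ^ 2) * S) := by ring
  exact le_of_mul_le_mul_left this (by positivity)

local notation "ℓ²" => lp (fun _ : ℕ => ℝ) 2

lemma orthonormal_lp_single : Orthonormal ℝ fun n : ℕ => (lp.single 2 n 1 : ℓ²) := by
  rw [orthonormal_iff_ite]
  intro i j
  rw [lp.inner_single_left, lp.single_apply]
  split_ifs <;> simp_all

lemma lp.hasSum_sq (y : ℓ²) : HasSum (fun n => y n ^ 2) (‖y‖ ^ 2) := by
  simpa using lp.hasSum_norm (p := 2) (by norm_num) y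

lemma apply_eq_inner_adjoint_single [CompleteSpace E] (T : E →L[ℝ] ℓ²) (x : E) (n : ℕ) :
    T x n = ⟪x, (T†) (lp.single 2 n 1)⟫ := by
  simp [ContinuousLinearMap.adjoint_inner_right, lp.inner_single_right]

lemma sum_norm_adjoint_single_sq_le (T : ℓ² →L[ℝ] ℓ²)
    (hT : Summable fun m => ‖T (lp.single 2 m 1)‖ ^ 2) (s : Finset ℕ) :
    ∑ n ∈ s, ‖(T†) (lp.single 2 n 1)‖ ^ 2 ≤ ∑' m, ‖T (lp.single 2 m 1)‖ ^ 2 := by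
  have rows : ∀ n, HasSum (fun m => T (lp.single 2 m 1) n ^ 2) (‖(T†) (lp.single 2 n 1)‖ ^ 2) := by
    intro n
    convert lp.hasSum_sq ((T†) (lp.single 2 n 1)) using 2 with m
    rw [apply_eq_inner_adjoint_single, lp.inner_single_left]
    simp
  exact hasSum_le (fun m => sum_le_hasSum s (fun n _ => sq_nonneg _) (lp.hasSum_sq _))
    (hasSum_sum fun n _ => rows n) hT.hasSum

theorem summable_of_isPSumming [NormedAddCommGroup F] [InnerProductSpace ℝ F]
    {T : ℓ² →L[ℝ] F} {p c : ℝ} (hp : 0 < p) (hc : 0 ≤ c) (h : IsPSumming p T c) :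
    Summable fun n => ‖T (lp.single 2 n 1)‖ ^ 2 := by
  set k := ⌈p / 2⌉₊
  have hk : k ≠ 0 := (Nat.ceil_pos.mpr (by positivity)).ne'
  have h2k : IsPSumming (2 * k) T c :=
    h.mono_exponent hp (by linarith [Nat.le_ceil (p / 2)]) hc
  refine summable_of_sum_range_le (c := (4 * (2 * k)! * c ^ (2 * k)) ^ (k⁻¹ : ℝ))
    (fun n => sq_nonneg _) fun m => ?_
  rw [← Fin.sum_univ_eq_sum_range (fun n => ‖T (lp.single 2 n 1)‖ ^ 2),
    ← pow_le_pow_iff_left₀ (sum_nonneg fun _ _ => sq_nonneg _) (by positivity) hk,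
    rpow_inv_natCast_pow (by positivity) hk]
  exact h2k.sum_norm_sq_pow_le hc (orthonormal_lp_single.comp _ Fin.val_injective)

theorem isPSumming_one_of_summable (T : ℓ² →L[ℝ] ℓ²)
    (hT : Summable fun m => ‖T (lp.single 2 m 1)‖ ^ 2) :
    IsPSumming 1 T (√96 * √(∑' m, ‖T (lp.single 2 m 1)‖ ^ 2)) := by
  rw [isPSumming_iff_sum_rpow_le one_pos T (by positivity)]
  intro r x
  simp only [rpow_one]
  set w : ℕ → ℓ² := fun n => (T†) (lp.single 2 n 1)
  have truncated : ∀ K, ∑ i, √(∑ n ∈ range K, ⟪x i, w n⟫ ^ 2)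
      ≤ √96 * √(∑' m, ‖T (lp.single 2 m 1)‖ ^ 2) * weakLpNorm 1 x := fun K => by
    simp only [← Fin.sum_univ_eq_sum_range fun n => ⟪x _, w n⟫ ^ 2]
    refine (sum_sqrt_sum_inner_sq_le (fun n : Fin K => w n) x).trans ?_
    refine mul_le_mul_of_nonneg_right (mul_le_mul_of_nonneg_left (sqrt_le_sqrt ?_)
      (sqrt_nonneg _)) (weakLpNorm_nonneg x)
    rw [Fin.sum_univ_eq_sum_range fun n => ‖w n‖ ^ 2]
    exact sum_norm_adjoint_single_sq_le T hT _
  have limit : Tendsto (fun K => ∑ i, √(∑ n ∈ range K, ⟪x i, w n⟫ ^ 2)) atTop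
      (𝓝 (∑ i, ‖T (x i)‖)) := by
    refine tendsto_finsetSum _ fun i _ => ?_
    have h := lp.hasSum_sq (T (x i))
    simp only [apply_eq_inner_adjoint_single] at h
    have := (continuous_sqrt.tendsto _).comp h.tendsto_sum_nat
    rwa [sqrt_sq (norm_nonneg _)] at this
  exact le_of_tendsto' limit truncated

end Backward

/-- An operator on `ℓ₂` is `p`-summing (`1 ≤ p < ∞`) iff it is
Hilbert–Schmidt, i.e. `Σₙ ‖T eₙ‖² < ∞` for the standard orthonormal basis. -/
theorem pSumming_iff_hilbertSchmidt
    (p : ℝ) (hp : 1 ≤ p)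
    (T : lp (fun _ : ℕ => ℝ) 2 →L[ℝ] lp (fun _ : ℕ => ℝ) 2) :
    (∃ c : ℝ, 0 ≤ c ∧ IsPSumming p T c) ↔
      Summable fun n => ‖T (lp.single 2 n 1)‖ ^ (2 : ℕ) :=
  ⟨fun ⟨_, hc, h⟩ => summable_of_isPSumming (by linarith) hc h, fun hT =>
    ⟨_, by positivity, (isPSumming_one_of_summable T hT).mono_exponent one_pos hp (by positivity)⟩⟩
end

section
/- If the identity operator of a Banach space X is 2-summing, then X is finite-dimensional. -/
/-!
Pietsch domination, done by hand in finite dimension. If `id_E` is 2-summing with constant `c`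
on an `n`-dimensional space `E`, a separation argument (Ky Fan's lemma) in the space of bilinear
forms on `E` yields a form `B` in the closed convex hull of `{g ⊗ g : ‖g‖ ≤ 1}` with
`‖x‖² ≤ c² B(x, x)`. Such a `B` is nondegenerate, and the linear functional `B' ↦ tr (B⁻¹ B')` is
`n` at `B` but at most `c²` at every `g ⊗ g`: with `w = B⁻¹ g` one has
`g(w)² ≤ ‖w‖² ≤ c² B(w, w) = c² g(w)`. Hence `n ≤ c²`. An infinite-dimensional space has
finite-dimensional subspaces of every dimension, and the hypothesis restricts to them.
-/

open Set Module Metric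

section OrthantFunctional

variable {ι F : Type*} [FunLike F (ι → ℝ) ℝ] [LinearMapClass F ℝ (ι → ℝ) ℝ] {f : F}
  {s : Finset ι} {u : ℝ}

theorem apply_nonpos_of_forall_nonpos_lt (hf : ∀ t : ι → ℝ, (∀ i ∈ s, t i ≤ 0) → f t < u)
    {t : ι → ℝ} (ht : ∀ i ∈ s, t i ≤ 0) : f t ≤ 0 := by
  by_contra! hpos
  have hu : 0 < u := by simpa using hf 0 fun _ _ => le_rfl
  have := hf ((u / f t) • t) fun i hi => by
    simpa using mul_nonpos_of_nonneg_of_nonpos (by positivity) (ht i hi)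
  rw [map_smul, smul_eq_mul, div_mul_cancel₀ _ hpos.ne'] at this
  exact this.false

theorem eq_sum_mul_single_of_forall_nonpos_lt [DecidableEq ι]
    (hf : ∀ t : ι → ℝ, (∀ i ∈ s, t i ≤ 0) → f t < u) (t : ι → ℝ) :
    f t = ∑ i ∈ s, t i * f (Pi.single i 1) := by
  set z := t - ∑ i ∈ s, t i • Pi.single i (1 : ℝ)
  have hz : ∀ i ∈ s, z i = 0 := fun i hi => by simp [z, Pi.single_apply, hi]
  have hfz : f z = 0 := le_antisymm (apply_nonpos_of_forall_nonpos_lt hf fun i hi => (hz i hi).le)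
    (by simpa using apply_nonpos_of_forall_nonpos_lt hf (t := -z) fun i hi => by simp [hz i hi])
  have ht : t = z + ∑ i ∈ s, t i • Pi.single i (1 : ℝ) := by simp [z]
  nth_rewrite 1 [ht]
  simp [hfz]

end OrthantFunctional

section KyFan

variable {V ι : Type*} [AddCommGroup V] [Module ℝ V] [TopologicalSpace V] {K : Set V}

theorem IsCompact.exists_forall_mem_finset_nonpos_of_convex (hK : IsCompact K)
    (hKc : Convex ℝ K) (φ : ι → V →ᴬ[ℝ] ℝ) (s : Finset ι)
    (h : ∀ w : ι → ℝ, (∀ i, 0 ≤ w i) → ∃ x ∈ K, ∑ i ∈ s, w i * φ i x ≤ 0) :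
    ∃ x ∈ K, ∀ i ∈ s, φ i x ≤ 0 := by
  classical
  by_contra! hno
  let Φ : V → ι → ℝ := fun x i => φ i x
  let T : Set (ι → ℝ) := {t | ∀ i ∈ s, t i ≤ 0}
  have hT_convex : Convex ℝ T := fun t ht t' ht' a b ha hb _ i hi => by
    simpa using add_nonpos (mul_nonpos_of_nonneg_of_nonpos ha (ht i hi))
      (mul_nonpos_of_nonneg_of_nonpos hb (ht' i hi))
  have hT_closed : IsClosed T := by
    simp only [T, ofPred_forall]
    exact isClosed_biInter fun i _ => isClosed_le (continuous_apply i) continuous_const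
  have hΦK_convex : Convex ℝ (Φ '' K) := by
    rintro _ ⟨x, hx, rfl⟩ _ ⟨y, hy, rfl⟩ a b ha hb hab
    refine ⟨a • x + b • y, hKc hx hy ha hb hab, funext fun i => ?_⟩
    simpa [Φ] using Convex.combo_affine_apply hab (f := (φ i).toAffineMap)
  have hΦK_compact : IsCompact (Φ '' K) := hK.image (continuous_pi fun i => (φ i).cont)
  have hdisj : Disjoint T (Φ '' K) := by
    rw [Set.disjoint_left]
    rintro _ ht ⟨x, hx, rfl⟩
    obtain ⟨i, hi, hpos⟩ := hno x hx
    exact (ht i hi).not_gt hpos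
  obtain ⟨f, u, v, hfT, huv, hfΦK⟩ :=
    geometric_hahn_banach_closed_compact hT_convex hT_closed hΦK_convex hΦK_compact hdisj
  have hw : ∀ i, 0 ≤ f (Pi.single i 1) := fun i => by
    simpa using apply_nonpos_of_forall_nonpos_lt hfT (t := -Pi.single i 1) fun j _ =>
      neg_nonpos.2 ((Pi.single_nonneg.2 zero_le_one : (0 : ι → ℝ) ≤ Pi.single i 1) j)
  obtain ⟨x, hx, hsum⟩ := h _ hw
  have hfx := hfΦK (Φ x) ⟨x, hx, rfl⟩
  rw [eq_sum_mul_single_of_forall_nonpos_lt hfT] at hfx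
  have hu : 0 < u := by simpa using hfT 0 fun _ _ => le_rfl
  simp only [Φ, mul_comm (φ _ x)] at hfx
  linarith

theorem IsCompact.exists_forall_nonpos_of_convex (hK : IsCompact K) (hKc : Convex ℝ K)
    (φ : ι → V →ᴬ[ℝ] ℝ)
    (h : ∀ (s : Finset ι) (w : ι → ℝ), (∀ i, 0 ≤ w i) → ∃ x ∈ K, ∑ i ∈ s, w i * φ i x ≤ 0) :
    ∃ x ∈ K, ∀ i, φ i x ≤ 0 := by
  obtain ⟨x, hxK, hx⟩ := hK.inter_iInter_nonempty (fun i => {x | φ i x ≤ 0})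
    (fun i => isClosed_le (φ i).cont continuous_const) fun s => by
      obtain ⟨x, hxK, hx⟩ := hK.exists_forall_mem_finset_nonpos_of_convex hKc φ s (h s)
      exact ⟨x, hxK, mem_iInter₂.2 hx⟩
  exact ⟨x, hxK, by simpa using hx⟩

end KyFan

section Pietsch

/-- The second-moment forms `∫ g ⊗ g dμ` of the probability measures `μ` on the dual unit ball,
i.e. of the candidate Pietsch measures. -/
def pietschSet (E : Type*) [NormedAddCommGroup E] [NormedSpace ℝ E] :
    Set (E →L[ℝ] StrongDual ℝ E) :=
  closedConvexHull ℝ ((fun g : StrongDual ℝ E => g.smulRight g) '' closedBall 0 1)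

variable {E : Type*} [NormedAddCommGroup E] [NormedSpace ℝ E]

theorem injective_of_sq_norm_le {c : ℝ} {B : E →L[ℝ] StrongDual ℝ E}
    (hle : ∀ x, ‖x‖ ^ 2 ≤ c ^ 2 * B x x) : Function.Injective B :=
  (injective_iff_map_eq_zero B).2 fun x hx =>
    norm_le_zero_iff.1 (by nlinarith [hle x, norm_nonneg x, show B x x = 0 by simp [hx]])

theorem apply_le_sq_of_sq_norm_le {c : ℝ} {B : E →L[ℝ] StrongDual ℝ E}
    (hle : ∀ x, ‖x‖ ^ 2 ≤ c ^ 2 * B x x) {g : StrongDual ℝ E} (hg : ‖g‖ ≤ 1) {w : E}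
    (hw : B w = g) : g w ≤ c ^ 2 := by
  have hgw : g w ^ 2 ≤ ‖w‖ ^ 2 := by
    rw [← sq_abs]
    exact pow_le_pow_left₀ (abs_nonneg _) ((g.le_opNorm w).trans (by nlinarith [norm_nonneg w])) 2
  have hBw := hle w
  rw [hw] at hBw
  nlinarith [sq_nonneg c]

variable [FiniteDimensional ℝ E]

theorem isCompact_pietschSet : IsCompact (pietschSet E) := by
  have hcont : Continuous fun g : StrongDual ℝ E => g.smulRight g :=
    (ContinuousLinearMap.smulRightL ℝ E (StrongDual ℝ E)).continuous₂.comp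
      (continuous_id.prodMk continuous_id)
  have hcpt : IsCompact ((fun g : StrongDual ℝ E => g.smulRight g) '' closedBall 0 1) :=
    (isCompact_closedBall 0 1).image hcont
  have := FiniteDimensional.proper_real (E →L[ℝ] StrongDual ℝ E)
  rw [pietschSet, closedConvexHull_eq_closure_convexHull]
  exact ((isBounded_convexHull (E := E →L[ℝ] StrongDual ℝ E)).2 hcpt.isBounded).isCompact_closure

theorem exists_mem_pietschSet_sq_norm_le {c : ℝ}
    (h : ∀ (m : ℕ) (y : Fin m → E), ∃ g : StrongDual ℝ E, ‖g‖ ≤ 1 ∧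
      ∑ j, ‖y j‖ ^ 2 ≤ c ^ 2 * ∑ j, g (y j) ^ 2) :
    ∃ B ∈ pietschSet E, ∀ x, ‖x‖ ^ 2 ≤ c ^ 2 * B x x := by
  let φ : E → (E →L[ℝ] StrongDual ℝ E) →ᴬ[ℝ] ℝ := fun x =>
    ContinuousAffineMap.const ℝ _ (‖x‖ ^ 2) - c ^ 2 • ((ContinuousLinearMap.apply ℝ ℝ x).comp
      (ContinuousLinearMap.apply ℝ (StrongDual ℝ E) x)).toContinuousAffineMap
  have hφ : ∀ x B, φ x B = ‖x‖ ^ 2 - c ^ 2 * B x x := fun x B => by simp [φ]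
  obtain ⟨B, hB, hBφ⟩ := isCompact_pietschSet.exists_forall_nonpos_of_convex
    convex_closedConvexHull φ fun s w hw => by
      -- `w x * (‖x‖² - c² g(x)²) = ‖√(w x) • x‖² - c² g(√(w x) • x)²`
      obtain ⟨g, hg, hsum⟩ :=
        h s.card fun j => √(w (s.equivFin.symm j)) • (s.equivFin.symm j : E)
      refine ⟨g.smulRight g, subset_closedConvexHull ⟨g, mem_closedBall_zero_iff.2 hg, rfl⟩, ?_⟩
      simp only [norm_smul, map_smul, smul_eq_mul, mul_pow, Real.norm_eq_abs, sq_abs,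
        Real.sq_sqrt (hw _)] at hsum
      rw [← Finset.sum_coe_sort, ← Equiv.sum_comp s.equivFin.symm]
      simp only [hφ, ContinuousLinearMap.smulRight_apply, smul_apply, smul_eq_mul, mul_sub,
        Finset.sum_sub_distrib, sub_nonpos]
      refine hsum.trans_eq ?_
      rw [Finset.mul_sum]
      exact Finset.sum_congr rfl fun j _ => by ring
  exact ⟨B, hB, fun x => by simpa [hφ] using hBφ x⟩

theorem finrank_le_of_mem_pietschSet {c : ℝ} {B : E →L[ℝ] StrongDual ℝ E}
    (hB : B ∈ pietschSet E) (hle : ∀ x, ‖x‖ ^ 2 ≤ c ^ 2 * B x x) :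
    (finrank ℝ E : ℝ) ≤ c ^ 2 := by
  have hdim : finrank ℝ E = finrank ℝ (StrongDual ℝ E) :=
    Subspace.dual_finrank_eq.symm.trans LinearMap.toContinuousLinearMap.finrank_eq
  let e := LinearMap.linearEquivOfInjective B.toLinearMap (injective_of_sq_norm_le hle) hdim
  let Ψ : (E →L[ℝ] StrongDual ℝ E) →ₗ[ℝ] ℝ := LinearMap.trace ℝ E ∘ₗ
    LinearMap.compRight ℝ e.symm.toLinearMap ∘ₗ ContinuousLinearMap.coeLM ℝ
  have hΨB : Ψ B = finrank ℝ E := by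
    have : e.symm.toLinearMap ∘ₗ B.toLinearMap = LinearMap.id := by
      ext x; exact e.symm_apply_apply x
    simp [Ψ, LinearMap.compRight_apply, this]
  have hΨ_sq : ∀ g : StrongDual ℝ E, ‖g‖ ≤ 1 → Ψ (g.smulRight g) ≤ c ^ 2 := by
    intro g hg
    have hcomp : e.symm.toLinearMap ∘ₗ (g : E →ₗ[ℝ] ℝ).smulRight g =
        (g : E →ₗ[ℝ] ℝ).smulRight (e.symm g) := by
      ext x; simp
    have hΨg : Ψ (g.smulRight g) = g (e.symm g) := by
      simp [Ψ, LinearMap.compRight_apply, hcomp]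
    rw [hΨg]
    exact apply_le_sq_of_sq_norm_le hle hg (e.apply_symm_apply g)
  have hΨ_cont : Continuous Ψ :=
    LinearMap.continuous_of_finiteDimensional (E := E →L[ℝ] StrongDual ℝ E) Ψ
  have hsub : pietschSet E ⊆ {B' | Ψ B' ≤ c ^ 2} := by
    refine closedConvexHull_min ?_ (convex_halfSpace_le Ψ.isLinear _)
      (isClosed_le hΨ_cont continuous_const)
    rintro _ ⟨g, hg, rfl⟩
    exact hΨ_sq g (mem_closedBall_zero_iff.1 hg)
  simpa [hΨB] using hsub hB

end Pietsch

theorem IsPSumming.exists_sum_sq_le {X Y : Type} [NormedAddCommGroup X] [NormedSpace ℝ X]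
    [NormedAddCommGroup Y] [NormedSpace ℝ Y] {T : X →L[ℝ] Y} {c : ℝ} (h : IsPSumming 2 T c)
    {E : Type} [NormedAddCommGroup E] [NormedSpace ℝ E] [FiniteDimensional ℝ E]
    (S : E →L[ℝ] X) (hS : ‖S‖ ≤ 1) {m : ℕ} (y : Fin m → E) :
    ∃ g : StrongDual ℝ E, ‖g‖ ≤ 1 ∧ ∑ j, ‖T (S (y j))‖ ^ 2 ≤ c ^ 2 * ∑ j, g (y j) ^ 2 := by
  have hy := h m fun j => S (y j)
  simp only [Real.rpow_two, sq_abs, ← Real.sqrt_eq_rpow] at hy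
  obtain ⟨g, hg, hmax⟩ := (isCompact_closedBall (0 : StrongDual ℝ E) 1).exists_isMaxOn
    ⟨0, mem_closedBall_self zero_le_one⟩ (Continuous.continuousOn (by fun_prop) :
      ContinuousOn (fun g : StrongDual ℝ E => ∑ j, g (y j) ^ 2) _)
  refine ⟨g, mem_closedBall_zero_iff.1 hg, ?_⟩
  have : Nonempty {f : X →L[ℝ] ℝ // ‖f‖ ≤ 1} := ⟨⟨0, by simp⟩⟩
  have hsup : ⨆ f : {f : X →L[ℝ] ℝ // ‖f‖ ≤ 1}, √(∑ j, f.1 (S (y j)) ^ 2) ≤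
      √(∑ j, g (y j) ^ 2) :=
    ciSup_le fun f => Real.sqrt_le_sqrt <| hmax (a := f.1.comp S) <|
      mem_closedBall_zero_iff.2 <| (f.1.opNorm_comp_le _).trans <| mul_le_one₀ f.2 (norm_nonneg _) hS
  have hle : √(∑ j, ‖T (S (y j))‖ ^ 2) ≤ |c| * √(∑ j, g (y j) ^ 2) :=
    hy.trans <| (mul_le_mul_of_nonneg_right (le_abs_self c)
      (Real.iSup_nonneg fun _ => Real.sqrt_nonneg _)).trans
      (mul_le_mul_of_nonneg_left hsup (abs_nonneg c))
  have := pow_le_pow_left₀ (Real.sqrt_nonneg _) hle 2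
  rwa [Real.sq_sqrt (by positivity), mul_pow, sq_abs, Real.sq_sqrt (by positivity)] at this

theorem exists_finiteDimensional_submodule_lt_finrank {K M : Type*} [Field K] [AddCommGroup M]
    [Module K M] (hM : ¬FiniteDimensional K M) (n : ℕ) :
    ∃ E : Submodule K M, FiniteDimensional K E ∧ n < finrank K E := by
  obtain ⟨x, hx⟩ := exists_linearIndependent_of_le_rank (R := K) (M := M) (n := n + 1) <|
    Cardinal.natCast_lt_aleph0.le.trans <| not_lt.1 fun h => hM (Module.rank_lt_aleph0_iff.1 h)
  have hrank := finrank_span_eq_card hx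
  refine ⟨Submodule.span K (Set.range x), Module.finite_of_finrank_pos ?_, ?_⟩ <;> simp [hrank]

theorem finiteDimensional_of_id_two_summing_general
    {X : Type} [NormedAddCommGroup X] [NormedSpace ℝ X]
    (c : ℝ) (h : IsPSumming 2 (ContinuousLinearMap.id ℝ X) c) :
    FiniteDimensional ℝ X := by
  by_contra hX
  obtain ⟨E, _, hE⟩ := exists_finiteDimensional_submodule_lt_finrank hX ⌈c ^ 2⌉₊
  obtain ⟨B, hB, hBle⟩ := exists_mem_pietschSet_sq_norm_le (E := E) (c := c) fun m y => by
    simpa using h.exists_sum_sq_le E.subtypeL (Submodule.norm_subtypeL_le E) y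
  have hlt : c ^ 2 < finrank ℝ E := (Nat.le_ceil _).trans_lt (Nat.cast_lt.2 hE)
  exact hlt.not_ge (finrank_le_of_mem_pietschSet hB hBle)

/-- If the identity operator of a Banach space is 2-summing, then the space is
finite-dimensional. -/
theorem finiteDimensional_of_id_two_summing
    {X : Type} [NormedAddCommGroup X] [NormedSpace ℝ X] [CompleteSpace X]
    (c : ℝ) (h : IsPSumming 2 (ContinuousLinearMap.id ℝ X) c) :
    FiniteDimensional ℝ X :=
  finiteDimensional_of_id_two_summing_general c h
end
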